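/- arXiv:1406.4063 — 3 statements merged into one kernel-verified Lean document; each statement's English description precedes it below -/
import Mathlib

section
/- (Theorem 3: sufficiently low filter gain for an experimental constraint.) Under the setting of the invariant lemma — g C² on an open set containing the compact box I, strict univariate Lipschitz constants κ_i > 0, strict second-derivative constants M_{i₁i₂} > 0 with worst-case quadratic growth bound Q̄ and worst-case linear growth bound L̄ = Σ_i κ_i(u^U_i − u^L_i), γ ∈ [0,1) with |∂g/∂u_i| ≤ κ̃_i ≤ γκ_i on I, ε, δ > 0, iterates u_{k+1} = u_k + K_k(v_k − u_k) with u_k, v_k ∈ I, K_k ∈ [0,1], g(u_0) < 0, and for every k: g(u_k) + K_k Σ_i κ_i|v_{k,i} − u_{k,i}| ≤ 0 and (if g(u_k) ≥ −ε) ∇g(u_k)ᵀ(v_k − u_k) ≤ −δ — it follows that for every k, every K ∈ [0, min[(1 − γ)ε, 2(1 − γ)δ²/Q̄, −g(u_0)] / L̄] satisfies g(u_k) + K Σ_i κ_i|v_{k,i} − u_{k,i}| ≤ 0. -/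
/-!
Put `a_k = g (u k)`, `S_k = ∑ i, κ i * |v k i - u k i| ≤ L̄` and let `m` be the minimum in the
gain bound. It suffices to show the invariant `a_k ≤ -m`, since then `K' * S_k ≤ K' * L̄ ≤ m`.
The mean value theorem with `κ̃ ≤ γ κ`, together with feasibility of step `k`, gives the
contraction `a_{k+1} ≤ a_k + γ K_k S_k ≤ (1 - γ) a_k`; this preserves the invariant when
`a_k < -ε`, and also when the step is long (`K_k Q̄ > 2p` with `p = -∇g(u_k)ᵀ(v_k - u_k) ≥ δ`),
because then `γ (-a_k) ≥ K_k p > 2δ²/Q̄`. For short steps the second-order Taylor bound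
`a_{k+1} ≤ a_k - K_k p + K_k² Q̄ / 2` gives `a_{k+1} ≤ a_k`.
-/

open Set Finset

section Coordinates

variable {ι : Type*} [Fintype ι]

lemma ContinuousLinearMap.abs_apply_le_sum_mul_abs [DecidableEq ι] (L : (ι → ℝ) →L[ℝ] ℝ)
    {C : ι → ℝ} (hC : ∀ i, |L (Pi.single i 1)| ≤ C i) (w : ι → ℝ) :
    |L w| ≤ ∑ i, C i * |w i| := by
  have hL : L w = ∑ i, w i * L (Pi.single i 1) := by
    conv_lhs => rw [← Finset.univ_sum_single w]
    rw [map_sum]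
    refine sum_congr rfl fun i _ => ?_
    rw [← smul_eq_mul, ← map_smul, ← Pi.single_smul', smul_eq_mul, mul_one]
  rw [hL]
  refine (abs_sum_le_sum_abs _ _).trans (sum_le_sum fun i _ => ?_)
  rw [abs_mul, mul_comm]
  exact mul_le_mul_of_nonneg_right (hC i) (abs_nonneg _)

lemma sum_mul_abs_smul (C w : ι → ℝ) (t : ℝ) :
    ∑ i, C i * |(t • w) i| = |t| * ∑ i, C i * |w i| := by
  simp only [Pi.smul_apply, smul_eq_mul, abs_mul, mul_sum]
  exact sum_congr rfl fun i _ => by ring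

lemma sum_mul_abs_le_mul_sum_mul_abs {C c : ι → ℝ} {γ : ℝ} (hC : ∀ i, C i ≤ γ * c i)
    (w : ι → ℝ) : ∑ i, C i * |w i| ≤ γ * ∑ i, c i * |w i| := by
  rw [mul_sum]
  exact sum_le_sum fun i _ =>
    (mul_le_mul_of_nonneg_right (hC i) (abs_nonneg _)).trans_eq (mul_assoc _ _ _)

lemma sum_sum_mul_abs_smul_le {M : ι → ι → ℝ} (hM : ∀ i j, 0 ≤ M i j) {w r : ι → ℝ}
    (hw : ∀ i, |w i| ≤ r i) (t : ℝ) :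
    ∑ i, ∑ j, M i j * |(t • w) i| * |(t • w) j| ≤ t ^ 2 * ∑ i, ∑ j, M i j * r i * r j := by
  have hsmul : ∀ i j,
      M i j * |(t • w) i| * |(t • w) j| = t ^ 2 * (M i j * |w i| * |w j|) := by
    intro i j
    simp only [Pi.smul_apply, smul_eq_mul, abs_mul, ← sq_abs t]
    ring
  simp only [hsmul, ← mul_sum]
  refine mul_le_mul_of_nonneg_left (sum_le_sum fun i _ => sum_le_sum fun j _ => ?_) (sq_nonneg t)
  exact mul_le_mul (mul_le_mul_of_nonneg_left (hw i) (hM i j)) (hw j) (abs_nonneg _)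
    (mul_nonneg (hM i j) ((abs_nonneg _).trans (hw i)))

lemma Convex.sub_le_sum_mul_abs_of_abs_fderiv_le [DecidableEq ι] {s : Set (ι → ℝ)}
    (hs : Convex ℝ s) {f : (ι → ℝ) → ℝ} (hf : ∀ z ∈ s, DifferentiableAt ℝ f z) {C : ι → ℝ}
    (hC : ∀ z ∈ s, ∀ i, |fderiv ℝ f z (Pi.single i 1)| ≤ C i) {x y : ι → ℝ}
    (hx : x ∈ s) (hy : y ∈ s) :
    f y - f x ≤ ∑ i, C i * |(y - x) i| := by
  obtain ⟨z, hz, hmvt⟩ :=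
    domain_mvt (fun z hz => (hf z hz).hasFDerivAt.hasFDerivWithinAt) hs hx hy
  rw [hmvt]
  exact (le_abs_self _).trans
    ((fderiv ℝ f z).abs_apply_le_sum_mul_abs (hC z (hs.segment_subset hx hy hz)) _)

lemma Convex.apply_add_smul_le_of_abs_fderiv_le [DecidableEq ι] {s : Set (ι → ℝ)}
    (hs : Convex ℝ s) {f : (ι → ℝ) → ℝ} (hf : ∀ z ∈ s, DifferentiableAt ℝ f z) {C : ι → ℝ}
    (hC : ∀ z ∈ s, ∀ i, |fderiv ℝ f z (Pi.single i 1)| ≤ C i) {x d : ι → ℝ} {t : ℝ}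
    (hx : x ∈ s) (hy : x + t • d ∈ s) (ht : 0 ≤ t) :
    f (x + t • d) ≤ f x + t * ∑ i, C i * |d i| := by
  have h := hs.sub_le_sum_mul_abs_of_abs_fderiv_le hf hC hx hy
  rw [add_sub_cancel_left, sum_mul_abs_smul, abs_of_nonneg ht] at h
  linarith

end Coordinates

lemma fderiv_fderiv_apply_comm {E F : Type*} [NormedAddCommGroup E] [NormedSpace ℝ E]
    [NormedAddCommGroup F] [NormedSpace ℝ F] {f : E → F} {z : E}
    (hf : DifferentiableAt ℝ (fderiv ℝ f) z) (d w : E) :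
    fderiv ℝ (fun x => fderiv ℝ f x d) z w = fderiv ℝ (fderiv ℝ f) z w d := by
  rw [fderiv_clm_apply hf (differentiableAt_const d)]
  simp

section SecondOrder

variable {ι : Type*} [Fintype ι] [DecidableEq ι]

lemma abs_fderiv_fderiv_apply_le {f : (ι → ℝ) → ℝ} {z : ι → ℝ}
    (hf : DifferentiableAt ℝ (fderiv ℝ f) z) {M : ι → ι → ℝ}
    (hM : ∀ i j, |fderiv ℝ (fun x => fderiv ℝ f x (Pi.single i 1)) z (Pi.single j 1)| ≤ M i j)
    (d : ι → ℝ) (j : ι) :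
    |fderiv ℝ (fun x => fderiv ℝ f x d) z (Pi.single j 1)| ≤ ∑ i, M i j * |d i| := by
  rw [fderiv_fderiv_apply_comm hf]
  refine (fderiv ℝ (fderiv ℝ f) z (Pi.single j 1)).abs_apply_le_sum_mul_abs (fun i => ?_) d
  rw [← fderiv_fderiv_apply_comm hf]
  exact hM i j

lemma le_add_add_half_of_hasDerivAt {φ φ' : ℝ → ℝ} {Q : ℝ}
    (hφ : ∀ t ∈ Icc (0 : ℝ) 1, HasDerivAt φ (φ' t) t)
    (hφ' : ∀ t ∈ Icc (0 : ℝ) 1, φ' t ≤ φ' 0 + t * Q) :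
    φ 1 ≤ φ 0 + φ' 0 + Q / 2 := by
  have hB : ∀ t, HasDerivAt (fun t => φ 0 + t * φ' 0 + t ^ 2 * Q / 2) (φ' 0 + t * Q) t := by
    intro t
    refine ((((hasDerivAt_id' t).mul_const (φ' 0)).const_add (φ 0)).add
      (((hasDerivAt_pow 2 t).mul_const Q).div_const 2)).congr_deriv ?_
    norm_num
    ring
  have h := image_le_of_deriv_right_le_deriv_boundary (a := 0) (b := 1) (f := φ)
    (fun t ht => (hφ t ht).continuousAt.continuousWithinAt)
    (fun t ht => (hφ t (Ico_subset_Icc_self ht)).hasDerivWithinAt) (by simp)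
    (fun t _ => (hB t).continuousAt.continuousWithinAt)
    (fun t _ => (hB t).hasDerivWithinAt) (fun t ht => hφ' t (Ico_subset_Icc_self ht))
    (right_mem_Icc.2 zero_le_one)
  simpa using h

lemma Convex.le_add_fderiv_add_half_sum {s : Set (ι → ℝ)} (hs : Convex ℝ s)
    {f : (ι → ℝ) → ℝ} (hf : ∀ z ∈ s, DifferentiableAt ℝ f z)
    (hf' : ∀ z ∈ s, DifferentiableAt ℝ (fderiv ℝ f) z) {M : ι → ι → ℝ}
    (hM : ∀ z ∈ s, ∀ i j,
      |fderiv ℝ (fun x => fderiv ℝ f x (Pi.single i 1)) z (Pi.single j 1)| ≤ M i j)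
    {x y : ι → ℝ} (hx : x ∈ s) (hy : y ∈ s) :
    f y ≤ f x + fderiv ℝ f x (y - x) +
      (∑ i, ∑ j, M i j * |(y - x) i| * |(y - x) j|) / 2 := by
  set d := y - x
  set Q := ∑ i, ∑ j, M i j * |d i| * |d j|
  have hseg : ∀ t ∈ Icc (0 : ℝ) 1, x + t • d ∈ s := fun t ht => hs.add_smul_sub_mem hx hy ht
  have hφ : ∀ t ∈ Icc (0 : ℝ) 1,
      HasDerivAt (fun t => f (x + t • d)) (fderiv ℝ f (x + t • d) d) t := fun t ht =>
    (hf _ (hseg t ht)).hasFDerivAt.comp_hasDerivAt t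
      (by simpa using ((hasDerivAt_id' t).smul_const d).const_add x)
  -- the directional derivative along the segment grows at most linearly, by the mean value
  -- theorem applied to `z ↦ f' z d`
  have hφ' : ∀ t ∈ Icc (0 : ℝ) 1,
      fderiv ℝ f (x + t • d) d ≤ fderiv ℝ f (x + (0 : ℝ) • d) d + t * Q := by
    intro t ht
    have h := hs.sub_le_sum_mul_abs_of_abs_fderiv_le (f := fun z => fderiv ℝ f z d)
      (fun z hz => (hf' z hz).clm_apply (differentiableAt_const d))
      (fun z hz => abs_fderiv_fderiv_apply_le (hf' z hz) (hM z hz) d) hx (hseg t ht)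
    have hQ : ∑ j, (∑ i, M i j * |d i|) * |d j| = Q := by
      simp only [Q, sum_mul]
      exact sum_comm
    rw [add_sub_cancel_left, sum_mul_abs_smul, hQ, abs_of_nonneg ht.1] at h
    rw [zero_smul, add_zero]
    linarith
  simpa [d] using le_add_add_half_of_hasDerivAt hφ hφ'

lemma Convex.apply_add_smul_le_of_abs_fderiv_fderiv_le {s : Set (ι → ℝ)} (hs : Convex ℝ s)
    {f : (ι → ℝ) → ℝ} (hf : ∀ z ∈ s, DifferentiableAt ℝ f z)
    (hf' : ∀ z ∈ s, DifferentiableAt ℝ (fderiv ℝ f) z) {M : ι → ι → ℝ} (hM0 : ∀ i j, 0 ≤ M i j)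
    (hM : ∀ z ∈ s, ∀ i j,
      |fderiv ℝ (fun x => fderiv ℝ f x (Pi.single i 1)) z (Pi.single j 1)| ≤ M i j)
    {x d r : ι → ℝ} {t : ℝ} (hx : x ∈ s) (hy : x + t • d ∈ s) (hd : ∀ i, |d i| ≤ r i) :
    f (x + t • d) ≤ f x + t * fderiv ℝ f x d + t ^ 2 * (∑ i, ∑ j, M i j * r i * r j) / 2 := by
  have h := hs.le_add_fderiv_add_half_sum hf hf' hM hx hy
  rw [add_sub_cancel_left, map_smul, smul_eq_mul] at h
  linarith [sum_sum_mul_abs_smul_le hM0 hd t]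

end SecondOrder

/-- `a` and `a'` stand for consecutive constraint values `g (u k)` and `g (u (k + 1))`, `t` for
the gain, `S` for the weighted step length and `p` for the descent `-∇g(u k)ᵀ(v k - u k)`. -/
lemma filter_step_le_neg {γ ε δ Q m a a' t S p : ℝ} (hγ : γ ∈ Ico (0 : ℝ) 1) (hδ : 0 < δ)
    (ht : 0 ≤ t) (hmε : m ≤ (1 - γ) * ε) (hmδ : m ≤ 2 * (1 - γ) * δ ^ 2 / Q)
    (ha : a ≤ -m) (hfeas : a + t * S ≤ 0) (hp : p ≤ γ * S) (hdesc : -ε ≤ a → δ ≤ p)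
    (hlip : a' ≤ a + γ * (t * S)) (htaylor : a' ≤ a - t * p + t ^ 2 * Q / 2) :
    a' ≤ -m := by
  obtain ⟨hγ0, hγ1⟩ := hγ
  have hγtS : γ * (t * S) ≤ γ * -a := mul_le_mul_of_nonneg_left (by linarith) hγ0
  have hcontract : a' ≤ (1 - γ) * a := by linarith
  by_cases hfar : a < -ε
  · nlinarith
  have hδp : δ ≤ p := hdesc (not_lt.1 hfar)
  by_cases hshort : t * Q ≤ 2 * p
  · nlinarith
  replace hshort := not_le.1 hshort
  have hQ : 0 < Q := by nlinarith
  have htp : t * p ≤ γ * (t * S) := by nlinarith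
  have hδQ : 2 * δ ^ 2 / Q < γ * -a := by
    rw [div_lt_iff₀ hQ]
    nlinarith
  have ha0 : 0 < -a := pos_of_mul_pos_right ((by positivity : 0 < 2 * δ ^ 2 / Q).trans hδQ) hγ0
  have hm : m < (1 - γ) * -a := by
    calc m ≤ (1 - γ) * (2 * δ ^ 2 / Q) := hmδ.trans_eq (by ring)
      _ < (1 - γ) * (γ * -a) := mul_lt_mul_of_pos_left hδQ (by linarith)
      _ ≤ (1 - γ) * -a :=
        mul_le_mul_of_nonneg_left (mul_le_of_le_one_left ha0.le hγ1.le) (by linarith)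
  linarith

lemma add_mul_nonpos_of_le_div {a m L S K : ℝ} (ham : a ≤ -m) (ha : a ≤ 0) (hS : 0 ≤ S)
    (hSL : S ≤ L) (hK : K ∈ Icc 0 (m / L)) : a + K * S ≤ 0 := by
  rcases (hS.trans hSL).eq_or_lt with hL | hL
  · have hK0 : K = 0 := le_antisymm (by simpa [← hL] using hK.2) hK.1
    simpa [hK0] using ha
  · have hKL : K * L ≤ m := (le_div_iff₀ hL).1 hK.2
    nlinarith [mul_le_mul_of_nonneg_left hSL hK.1]

theorem filter_gain_experimental_constraint_general
    {n : ℕ} (uL uU : Fin n → ℝ)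
    (g : (Fin n → ℝ) → ℝ)
    (U : Set (Fin n → ℝ)) (hUopen : IsOpen U) (hIU : Set.Icc uL uU ⊆ U)
    (hg : ContDiffOn ℝ 2 g U)
    (κ : Fin n → ℝ) (hκpos : ∀ i, 0 < κ i)
    (M : Fin n → Fin n → ℝ) (hMpos : ∀ i₁ i₂, 0 < M i₁ i₂)
    (hM : ∀ u ∈ Set.Icc uL uU, ∀ i₁ i₂,
      |fderiv ℝ (fun x => fderiv ℝ g x (Pi.single i₁ 1)) u (Pi.single i₂ 1)| < M i₁ i₂)
    (γ : ℝ) (hγ : γ ∈ Set.Ico (0 : ℝ) 1)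
    (κt : Fin n → ℝ)
    (hκt : ∀ u ∈ Set.Icc uL uU, ∀ i, |fderiv ℝ g u (Pi.single i 1)| ≤ κt i)
    (hκtγ : ∀ i, κt i ≤ γ * κ i)
    (ε δ : ℝ) (hδ : 0 < δ)
    (u v : ℕ → (Fin n → ℝ)) (K : ℕ → ℝ)
    (huI : ∀ k, u k ∈ Set.Icc uL uU) (hvI : ∀ k, v k ∈ Set.Icc uL uU)
    (hKmem : ∀ k, K k ∈ Set.Icc (0 : ℝ) 1)
    (hupd : ∀ k, u (k + 1) = u k + K k • (v k - u k))
    (hfeas : ∀ k, g (u k) + K k * ∑ i, κ i * |v k i - u k i| ≤ 0)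
    (hdesc : ∀ k, g (u k) ≥ -ε → fderiv ℝ g (u k) (v k - u k) ≤ -δ) :
    ∀ k, ∀ K' ∈ Set.Icc 0
        (min ((1 - γ) * ε)
          (min (2 * (1 - γ) * δ ^ 2 /
              ∑ i₁, ∑ i₂, M i₁ i₂ * (uU i₁ - uL i₁) * (uU i₂ - uL i₂))
            (-g (u 0))) / ∑ i, κ i * (uU i - uL i)),
      g (u k) + K' * ∑ i, κ i * |v k i - u k i| ≤ 0 := by
  set m := min ((1 - γ) * ε) (min (2 * (1 - γ) * δ ^ 2 /
    ∑ i₁, ∑ i₂, M i₁ i₂ * (uU i₁ - uL i₁) * (uU i₂ - uL i₂)) (-g (u 0)))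
  have hgd : ∀ z ∈ Icc uL uU, DifferentiableAt ℝ g z := fun z hz =>
    (hg.contDiffAt (hUopen.mem_nhds (hIU hz))).differentiableAt two_ne_zero
  have hg'd : ∀ z ∈ Icc uL uU, DifferentiableAt ℝ (fderiv ℝ g) z := fun z hz =>
    ((hg.contDiffAt (hUopen.mem_nhds (hIU hz))).fderiv_right le_rfl).differentiableAt
      one_ne_zero
  have hwidth : ∀ k i, |(v k - u k) i| ≤ uU i - uL i := fun k i =>
    abs_sub_le_of_le_of_le ((hvI k).1 i) ((hvI k).2 i) ((huI k).1 i) ((huI k).2 i)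
  have hlip : ∀ k, g (u (k + 1)) ≤ g (u k) + γ * (K k * ∑ i, κ i * |(v k - u k) i|) := by
    intro k
    have h := (convex_Icc uL uU).apply_add_smul_le_of_abs_fderiv_le hgd hκt (huI k)
      (hupd k ▸ huI (k + 1)) (hKmem k).1
    rw [hupd k]
    nlinarith [sum_mul_abs_le_mul_sum_mul_abs hκtγ (v k - u k), (hKmem k).1]
  have htaylor : ∀ k, g (u (k + 1)) ≤ g (u k) - K k * -fderiv ℝ g (u k) (v k - u k) +
      K k ^ 2 * (∑ i₁, ∑ i₂, M i₁ i₂ * (uU i₁ - uL i₁) * (uU i₂ - uL i₂)) / 2 := fun k => by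
    rw [hupd k, mul_neg, sub_neg_eq_add]
    exact (convex_Icc uL uU).apply_add_smul_le_of_abs_fderiv_fderiv_le hgd hg'd
      (fun i j => (hMpos i j).le) (fun z hz i j => (hM z hz i j).le) (huI k)
      (hupd k ▸ huI (k + 1)) (hwidth k)
  have hslope : ∀ k, -fderiv ℝ g (u k) (v k - u k) ≤ γ * ∑ i, κ i * |(v k - u k) i| :=
    fun k => (neg_le_abs _).trans <|
      ((fderiv ℝ g (u k)).abs_apply_le_sum_mul_abs (hκt (u k) (huI k)) _).trans
        (sum_mul_abs_le_mul_sum_mul_abs hκtγ _)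
  have hinv : ∀ k, g (u k) ≤ -m := by
    intro k
    induction k with
    | zero => exact le_neg_of_le_neg ((min_le_right _ _).trans (min_le_right _ _))
    | succ k ih =>
      exact filter_step_le_neg hγ hδ (hKmem k).1 (min_le_left _ _)
        ((min_le_right _ _).trans (min_le_left _ _)) ih (hfeas k) (hslope k)
        (fun h => by linarith [hdesc k h]) (hlip k) (htaylor k)
  intro k K' hK'
  have hS : 0 ≤ ∑ i, κ i * |v k i - u k i| :=
    sum_nonneg fun i _ => mul_nonneg (hκpos i).le (abs_nonneg _)
  exact add_mul_nonpos_of_le_div (hinv k) (by nlinarith [hfeas k, (hKmem k).1]) hS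
    (sum_le_sum fun i _ => mul_le_mul_of_nonneg_left (hwidth k i) (hκpos i).le) hK'

/-- **Theorem 3.** Sufficiently low filter gain for an experimental
constraint: under the setting of the invariant lemma, for every iteration `k`, every
`K ∈ [0, min [(1-γ)ε, 2(1-γ)δ²/Q̄, -g (u 0)] / L̄]` satisfies
`g (u k) + K Σ_i κ i |v k i - u k i| ≤ 0`, where `L̄ = Σ_i κ i (uU i - uL i)` and
`Q̄ = Σ_{i₁} Σ_{i₂} M i₁ i₂ (uU i₁ - uL i₁)(uU i₂ - uL i₂)`. -/
theorem filter_gain_experimental_constraint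
    {n : ℕ} (uL uU : Fin n → ℝ)
    (g : (Fin n → ℝ) → ℝ)
    (U : Set (Fin n → ℝ)) (hUopen : IsOpen U) (hIU : Set.Icc uL uU ⊆ U)
    (hg : ContDiffOn ℝ 2 g U)
    (κ : Fin n → ℝ) (hκpos : ∀ i, 0 < κ i)
    (hκ : ∀ u ∈ Set.Icc uL uU, ∀ i, |fderiv ℝ g u (Pi.single i 1)| < κ i)
    (M : Fin n → Fin n → ℝ) (hMpos : ∀ i₁ i₂, 0 < M i₁ i₂)
    (hM : ∀ u ∈ Set.Icc uL uU, ∀ i₁ i₂,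
      |fderiv ℝ (fun x => fderiv ℝ g x (Pi.single i₁ 1)) u (Pi.single i₂ 1)| < M i₁ i₂)
    (γ : ℝ) (hγ : γ ∈ Set.Ico (0 : ℝ) 1)
    (κt : Fin n → ℝ)
    (hκt : ∀ u ∈ Set.Icc uL uU, ∀ i, |fderiv ℝ g u (Pi.single i 1)| ≤ κt i)
    (hκtγ : ∀ i, κt i ≤ γ * κ i)
    (ε δ : ℝ) (hε : 0 < ε) (hδ : 0 < δ)
    (u v : ℕ → (Fin n → ℝ)) (K : ℕ → ℝ)
    (huI : ∀ k, u k ∈ Set.Icc uL uU) (hvI : ∀ k, v k ∈ Set.Icc uL uU)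
    (hKmem : ∀ k, K k ∈ Set.Icc (0 : ℝ) 1)
    (hupd : ∀ k, u (k + 1) = u k + K k • (v k - u k))
    (hfeas : ∀ k, g (u k) + K k * ∑ i, κ i * |v k i - u k i| ≤ 0)
    (hdesc : ∀ k, g (u k) ≥ -ε → fderiv ℝ g (u k) (v k - u k) ≤ -δ)
    (h0 : g (u 0) < 0) :
    ∀ k, ∀ K' ∈ Set.Icc 0
        (min ((1 - γ) * ε)
          (min (2 * (1 - γ) * δ ^ 2 /
              ∑ i₁, ∑ i₂, M i₁ i₂ * (uU i₁ - uL i₁) * (uU i₂ - uL i₂))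
            (-g (u 0))) / ∑ i, κ i * (uU i - uL i)),
      g (u k) + K' * ∑ i, κ i * |v k i - u k i| ≤ 0 :=
  filter_gain_experimental_constraint_general uL uU g U hUopen hIU hg κ hκpos M hMpos hM γ hγ κt hκt
    hκtγ ε δ hδ u v K huI hvI hKmem hupd hfeas hdesc
end

section
/- (Per-iteration guaranteed cost decrease, core of Theorem 4.) Let φ be C² on an open set containing the compact box I ⊂ ℝ^{n_u} with strict second-derivative Lipschitz constants M_{i₁i₂} > 0 and worst-case quadratic growth bound Q̄. Let γ ∈ [0,1) be such that |∂²φ/(∂u_{i₂}∂u_{i₁})(u)| ≤ γ M_{i₁i₂} for all u ∈ I and all i₁, i₂. Let u, v ∈ I with S = Σ_{i₁}Σ_{i₂} M_{i₁i₂}|(v_{i₁} − u_{i₁})(v_{i₂} − u_{i₂})|, let δ > 0 satisfy ∇φ(u)ᵀ(v − u) ≤ −δ, let K̲ satisfy 0 < K̲ ≤ 2δ/Q̄, and let K ∈ [K̲, −2∇φ(u)ᵀ(v − u)/S] with K ≤ 1. Then φ(u + K(v − u)) − φ(u) ≤ max[ K̲(K̲ γ Q̄/2 − δ), 2(γ −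 1)δ²/Q̄ ] < 0. -/
/-!
Along the segment `t ↦ u + t • (v - u)`, the second directional derivative of `φ` is at most
`γ S`, since each mixed partial is at most `γ M i₁ i₂`. A second-order Taylor bound then gives
`φ (u + K • (v - u)) - φ u ≤ ψ K` with the convex quadratic `ψ K = K g + γ S K² / 2`,
`g = ∇φ(u)ᵀ(v - u) ≤ -δ`. On the step interval `[K̲, -2g/S]` the quadratic `ψ` is bounded by its
values at the endpoints: `ψ K̲ ≤ K̲ (K̲ γ Q̄/2 - δ)` because `S ≤ Q̄`, and
`ψ (-2g/S) = 2 (γ - 1) g²/S ≤ 2 (γ - 1) δ²/Q̄`. Both are negative since `γ < 1` and `K̲ ≤ 2δ/Q̄`.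
-/

open Set

theorem image_sub_le_of_second_deriv_le {f f' f'' : ℝ → ℝ} {a b C : ℝ} (hab : a ≤ b)
    (hf : ∀ t ∈ Icc a b, HasDerivAt f (f' t) t)
    (hf' : ∀ t ∈ Icc a b, HasDerivAt f' (f'' t) t)
    (hC : ∀ t ∈ Ico a b, f'' t ≤ C) :
    f b - f a ≤ (b - a) * f' a + C * (b - a) ^ 2 / 2 := by
  have hcont {g g' : ℝ → ℝ} (hg : ∀ t ∈ Icc a b, HasDerivAt g (g' t) t) :
      ContinuousOn g (Icc a b) :=
    fun t ht => (hg t ht).continuousAt.continuousWithinAt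
  have hline (t : ℝ) : HasDerivWithinAt (fun s => f' a + C * (s - a)) C (Ici t) t := by
    simpa using (((hasDerivAt_id t).sub_const a).const_mul C).const_add (f' a) |>.hasDerivWithinAt
  have hparabola (t : ℝ) : HasDerivWithinAt (fun s => f a + (s - a) * f' a + C * (s - a) ^ 2 / 2)
      (f' a + C * (t - a)) (Ici t) t := by
    have h := (hasDerivAt_id' t).sub_const a
    refine (((h.mul_const (f' a)).const_add (f a)).fun_add
      (((h.fun_pow 2).const_mul C).div_const 2)).hasDerivWithinAt.congr_deriv ?_
    norm_num
    ring
  have hslope : ∀ t ∈ Icc a b, f' t ≤ f' a + C * (t - a) :=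
    image_le_of_deriv_right_le_deriv_boundary (hcont hf')
      (fun t ht => (hf' t (Ico_subset_Icc_self ht)).hasDerivWithinAt) (by simp)
      (by fun_prop) (fun t _ => hline t) hC
  have hgrowth := image_le_of_deriv_right_le_deriv_boundary (hcont hf)
    (fun t ht => (hf t (Ico_subset_Icc_self ht)).hasDerivWithinAt) (by simp) (by fun_prop)
    (fun t _ => hparabola t) (fun t ht => hslope t (Ico_subset_Icc_self ht)) (right_mem_Icc.2 hab)
  linarith

theorem sub_le_fderiv_add_of_fderiv_fderiv_le {E : Type*} [NormedAddCommGroup E]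
    [NormedSpace ℝ E] {φ : E → ℝ} {x d : E} {a C : ℝ} (ha : 0 ≤ a)
    (hφ : ∀ t ∈ Icc 0 a, ContDiffAt ℝ 2 φ (x + t • d))
    (hC : ∀ t ∈ Icc 0 a, fderiv ℝ (fderiv ℝ φ) (x + t • d) d d ≤ C) :
    φ (x + a • d) - φ x ≤ a * fderiv ℝ φ x d + C * a ^ 2 / 2 := by
  have hline (t : ℝ) : HasDerivAt (fun s : ℝ => x + s • d) d t := by
    simpa using ((hasDerivAt_id t).smul_const d).const_add x
  have hf (t : ℝ) (ht : t ∈ Icc 0 a) :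
      HasDerivAt (fun s => φ (x + s • d)) (fderiv ℝ φ (x + t • d) d) t :=
    ((hφ t ht).differentiableAt (by norm_num)).hasFDerivAt.comp_hasDerivAt t (hline t)
  have hf' (t : ℝ) (ht : t ∈ Icc 0 a) : HasDerivAt (fun s => fderiv ℝ φ (x + s • d) d)
      (fderiv ℝ (fderiv ℝ φ) (x + t • d) d d) t := by
    have h1 : ContDiffAt ℝ 1 (fderiv ℝ φ) (x + t • d) := (hφ t ht).fderiv_right (by norm_num)
    have h2 := (h1.differentiableAt one_ne_zero).hasFDerivAt.comp_hasDerivAt t (hline t)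
    exact h2.clm_apply (hasDerivAt_const t d) |>.congr_deriv (by simp)
  have h := image_sub_le_of_second_deriv_le ha hf hf' fun t ht => hC t (Ico_subset_Icc_self ht)
  simp only [zero_smul, add_zero, sub_zero] at h
  exact h

theorem ContinuousLinearMap.apply_apply_eq_sum_single {ι : Type*} [Fintype ι] [DecidableEq ι]
    (B : (ι → ℝ) →L[ℝ] (ι → ℝ) →L[ℝ] ℝ) (x y : ι → ℝ) :
    B x y = ∑ i, ∑ j, x i * y j * B (Pi.single i 1) (Pi.single j 1) := by
  conv_lhs => rw [pi_eq_sum_univ' x, pi_eq_sum_univ' y]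
  simp only [map_sum, map_smul, FunLike.coe_sum, Finset.sum_apply, FunLike.coe_smul, Pi.smul_apply,
    smul_eq_mul, Finset.mul_sum]
  rw [Finset.sum_comm]
  simp only [mul_assoc, mul_left_comm]

theorem ContinuousLinearMap.abs_apply_apply_le {ι : Type*} [Fintype ι] [DecidableEq ι]
    (B : (ι → ℝ) →L[ℝ] (ι → ℝ) →L[ℝ] ℝ) (c : ι → ι → ℝ)
    (hB : ∀ i j, |B (Pi.single i 1) (Pi.single j 1)| ≤ c i j) (x y : ι → ℝ) :
    |B x y| ≤ ∑ i, ∑ j, c i j * |x i * y j| := by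
  rw [B.apply_apply_eq_sum_single]
  refine (Finset.abs_sum_le_sum_abs _ _).trans (Finset.sum_le_sum fun i _ => ?_)
  refine (Finset.abs_sum_le_sum_abs _ _).trans (Finset.sum_le_sum fun j _ => ?_)
  rw [abs_mul, mul_comm]
  exact mul_le_mul_of_nonneg_right (hB i j) (abs_nonneg _)

theorem fderiv_fderiv_apply_const {E F : Type*} [NormedAddCommGroup E] [NormedSpace ℝ E]
    [NormedAddCommGroup F] [NormedSpace ℝ F] {f : E → F} {x : E}
    (hf : DifferentiableAt ℝ (fderiv ℝ f) x) (v w : E) :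
    fderiv ℝ (fun y => fderiv ℝ f y v) x w = fderiv ℝ (fderiv ℝ f) x w v := by
  rw [fderiv_clm_apply hf (differentiableAt_const v)]
  simp

theorem fderiv_fderiv_apply_le_of_abs_partial_le {ι : Type*} [Fintype ι] [DecidableEq ι]
    {φ : (ι → ℝ) → ℝ} {y : ι → ℝ} (hφ : DifferentiableAt ℝ (fderiv ℝ φ) y) (c : ι → ι → ℝ)
    (hc : ∀ i j, |fderiv ℝ (fun x => fderiv ℝ φ x (Pi.single i 1)) y (Pi.single j 1)| ≤ c i j)
    (d : ι → ℝ) :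
    fderiv ℝ (fderiv ℝ φ) y d d ≤ ∑ i, ∑ j, c i j * |d i * d j| :=
  (le_abs_self _).trans <| (fderiv ℝ (fderiv ℝ φ) y).flip.abs_apply_apply_le c
    (fun i j => fderiv_fderiv_apply_const hφ (Pi.single i 1) (Pi.single j 1) ▸ hc i j) d d

theorem sum_mul_abs_sub_mul_sub_le {ι : Type*} [Fintype ι] {l r x y : ι → ℝ}
    (M : ι → ι → ℝ) (hM : ∀ i j, 0 ≤ M i j) (hx : x ∈ Icc l r) (hy : y ∈ Icc l r) :
    ∑ i, ∑ j, M i j * |(y i - x i) * (y j - x j)| ≤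
      ∑ i, ∑ j, M i j * (r i - l i) * (r j - l j) := by
  have hbound (i : ι) : |y i - x i| ≤ r i - l i :=
    abs_sub_le_of_le_of_le (hy.1 i) (hy.2 i) (hx.1 i) (hx.2 i)
  refine Finset.sum_le_sum fun i _ => Finset.sum_le_sum fun j _ => ?_
  rw [abs_mul, mul_assoc]
  exact mul_le_mul_of_nonneg_left
    (mul_le_mul (hbound i) (hbound j) (abs_nonneg _) ((abs_nonneg _).trans (hbound i))) (hM i j)

theorem quadratic_le_max_of_mem_Icc {a b c g x : ℝ} (hc : 0 ≤ c) (hx : x ∈ Icc a b) :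
    x * g + c * x ^ 2 / 2 ≤ max (a * g + c * a ^ 2 / 2) (b * g + c * b ^ 2 / 2) := by
  have hconv : ConvexOn ℝ univ fun x : ℝ => x * g + c * x ^ 2 / 2 :=
    (((LinearMap.mulRight ℝ g).convexOn convex_univ).add
      ((even_two.convexOn_pow (𝕜 := ℝ)).smul (c := c / 2) (by positivity))).congr fun x _ => by
        simp only [Pi.add_apply, LinearMap.mulRight_apply, smul_eq_mul]
        ring
  exact hconv.le_on_segment (mem_univ a) (mem_univ b) (by rwa [segment_eq_Icc (hx.1.trans hx.2)])

theorem step_quadratic_le_max {γ δ g S Q a K : ℝ} (hγ : γ ∈ Ico 0 1) (hδ : 0 ≤ δ)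
    (hg : g ≤ -δ) (ha : 0 ≤ a) (hS : 0 < S) (hSQ : S ≤ Q) (hK : K ∈ Icc a (-2 * g / S)) :
    K * g + γ * S * K ^ 2 / 2 ≤ max (a * (a * γ * Q / 2 - δ)) (2 * (γ - 1) * δ ^ 2 / Q) := by
  obtain ⟨hγ0, hγ1⟩ := hγ
  refine (quadratic_le_max_of_mem_Icc (by positivity) hK).trans (max_le_max ?_ ?_)
  · calc a * g + γ * S * a ^ 2 / 2 ≤ a * -δ + γ * Q * a ^ 2 / 2 := by gcongr
      _ = a * (a * γ * Q / 2 - δ) := by ring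
  · have hg2 : δ ^ 2 ≤ g ^ 2 := by nlinarith
    calc -2 * g / S * g + γ * S * (-2 * g / S) ^ 2 / 2 = 2 * (γ - 1) * (g ^ 2 / S) := by
          field_simp
          ring
      _ ≤ 2 * (γ - 1) * (δ ^ 2 / Q) :=
          mul_le_mul_of_nonpos_left (div_le_div₀ (sq_nonneg g) hg2 hS hSQ) (by linarith)
      _ = 2 * (γ - 1) * δ ^ 2 / Q := (mul_div_assoc _ _ _).symm

theorem max_step_bound_neg {γ δ Q a : ℝ} (hγ : γ ∈ Ico 0 1) (hδ : 0 < δ) (hQ : 0 < Q)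
    (ha : 0 < a) (haQ : a ≤ 2 * δ / Q) :
    max (a * (a * γ * Q / 2 - δ)) (2 * (γ - 1) * δ ^ 2 / Q) < 0 := by
  obtain ⟨hγ0, hγ1⟩ := hγ
  have haQ' : a * Q ≤ 2 * δ := (le_div_iff₀ hQ).1 haQ
  refine max_lt (mul_neg_of_pos_of_neg ha ?_) (div_neg_of_neg_of_pos ?_ hQ)
  · nlinarith [mul_le_mul_of_nonneg_left haQ' hγ0]
  · nlinarith [pow_pos hδ 2]

theorem per_iteration_cost_decrease_general
    {n : ℕ} (uL uU : Fin n → ℝ)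
    (φ : (Fin n → ℝ) → ℝ)
    (U : Set (Fin n → ℝ)) (hUopen : IsOpen U) (hIU : Set.Icc uL uU ⊆ U)
    (hφ : ContDiffOn ℝ 2 φ U)
    (M : Fin n → Fin n → ℝ) (hMpos : ∀ i₁ i₂, 0 < M i₁ i₂)
    (γ : ℝ) (hγ : γ ∈ Set.Ico (0 : ℝ) 1)
    (hγM : ∀ u ∈ Set.Icc uL uU, ∀ i₁ i₂,
      |fderiv ℝ (fun x => fderiv ℝ φ x (Pi.single i₁ 1)) u (Pi.single i₂ 1)|
        ≤ γ * M i₁ i₂)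
    (u v : Fin n → ℝ) (hu : u ∈ Set.Icc uL uU) (hv : v ∈ Set.Icc uL uU)
    (δ : ℝ) (hδ : 0 < δ)
    (hdesc : fderiv ℝ φ u (v - u) ≤ -δ)
    (Klow : ℝ) (hKlowpos : 0 < Klow)
    (hKlow : Klow ≤ 2 * δ / ∑ i₁, ∑ i₂, M i₁ i₂ * (uU i₁ - uL i₁) * (uU i₂ - uL i₂))
    (K : ℝ) (hK1 : K ≤ 1)
    (hK : K ∈ Set.Icc Klow
      (-2 * fderiv ℝ φ u (v - u) /
        ∑ i₁, ∑ i₂, M i₁ i₂ * |(v i₁ - u i₁) * (v i₂ - u i₂)|)) :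
    φ (u + K • (v - u)) - φ u ≤
        max
          (Klow * (Klow * γ *
              (∑ i₁, ∑ i₂, M i₁ i₂ * (uU i₁ - uL i₁) * (uU i₂ - uL i₂)) / 2 - δ))
          (2 * (γ - 1) * δ ^ 2 /
            ∑ i₁, ∑ i₂, M i₁ i₂ * (uU i₁ - uL i₁) * (uU i₂ - uL i₂)) ∧
      max
          (Klow * (Klow * γ *
              (∑ i₁, ∑ i₂, M i₁ i₂ * (uU i₁ - uL i₁) * (uU i₂ - uL i₂)) / 2 - δ))
          (2 * (γ - 1) * δ ^ 2 /
            ∑ i₁, ∑ i₂, M i₁ i₂ * (uU i₁ - uL i₁) * (uU i₂ - uL i₂)) < 0 := by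
  set S := ∑ i₁, ∑ i₂, M i₁ i₂ * |(v i₁ - u i₁) * (v i₂ - u i₂)|
  -- For `S = 0` the step interval would be `Icc Klow 0` (division by zero is `0`), hence empty.
  have hS : 0 < S :=
    (div_pos_iff_of_pos_left (by linarith)).1 (hKlowpos.trans_le (hK.1.trans hK.2))
  have hSQ := sum_mul_abs_sub_mul_sub_le M (fun i j => (hMpos i j).le) hu hv
  have hseg (t : ℝ) (ht : t ∈ Icc 0 K) : u + t • (v - u) ∈ Icc uL uU :=
    (convex_Icc uL uU).add_smul_sub_mem hu hv ⟨ht.1, ht.2.trans hK1⟩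
  have hsmooth (t : ℝ) (ht : t ∈ Icc 0 K) : ContDiffAt ℝ 2 φ (u + t • (v - u)) :=
    hφ.contDiffAt (hUopen.mem_nhds (hIU (hseg t ht)))
  have hcurv (t : ℝ) (ht : t ∈ Icc 0 K) :
      fderiv ℝ (fderiv ℝ φ) (u + t • (v - u)) (v - u) (v - u) ≤ γ * S := by
    have hD2 : DifferentiableAt ℝ (fderiv ℝ φ) (u + t • (v - u)) :=
      ((hsmooth t ht).fderiv_right (m := 1) (by norm_num)).differentiableAt one_ne_zero
    refine (fderiv_fderiv_apply_le_of_abs_partial_le hD2 _ (hγM _ (hseg t ht)) _).trans_eq ?_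
    simp only [S, Pi.sub_apply, Finset.mul_sum, mul_assoc]
  have htaylor := sub_le_fderiv_add_of_fderiv_fderiv_le (hKlowpos.le.trans hK.1) hsmooth hcurv
  exact ⟨htaylor.trans (step_quadratic_le_max hγ hδ.le hdesc hKlowpos.le hS hSQ hK),
    max_step_bound_neg hγ hδ (hS.trans_le hSQ) hKlowpos hKlow⟩

/-- Per-iteration guaranteed cost decrease (core of Theorem 4):
with `Q̄ = Σ_{i₁} Σ_{i₂} M i₁ i₂ (uU i₁ - uL i₁)(uU i₂ - uL i₂)`,
`S = Σ_{i₁} Σ_{i₂} M i₁ i₂ |(v i₁ - u i₁)(v i₂ - u i₂)|`,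
`|∂²φ/(∂u_{i₂}∂u_{i₁})| ≤ γ M i₁ i₂` on `I` with `γ ∈ [0,1)`,
`∇φ(u)ᵀ(v-u) ≤ -δ`, `0 < K̲ ≤ 2δ/Q̄`, and `K ∈ [K̲, -2∇φ(u)ᵀ(v-u)/S]` with `K ≤ 1`,
one has `φ(u + K•(v-u)) - φ u ≤ max [K̲(K̲ γ Q̄/2 - δ), 2(γ-1)δ²/Q̄] < 0`. -/
theorem per_iteration_cost_decrease
    {n : ℕ} (uL uU : Fin n → ℝ)
    (φ : (Fin n → ℝ) → ℝ)
    (U : Set (Fin n → ℝ)) (hUopen : IsOpen U) (hIU : Set.Icc uL uU ⊆ U)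
    (hφ : ContDiffOn ℝ 2 φ U)
    (M : Fin n → Fin n → ℝ) (hMpos : ∀ i₁ i₂, 0 < M i₁ i₂)
    (hM : ∀ u ∈ Set.Icc uL uU, ∀ i₁ i₂,
      |fderiv ℝ (fun x => fderiv ℝ φ x (Pi.single i₁ 1)) u (Pi.single i₂ 1)| < M i₁ i₂)
    (γ : ℝ) (hγ : γ ∈ Set.Ico (0 : ℝ) 1)
    (hγM : ∀ u ∈ Set.Icc uL uU, ∀ i₁ i₂,
      |fderiv ℝ (fun x => fderiv ℝ φ x (Pi.single i₁ 1)) u (Pi.single i₂ 1)|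
        ≤ γ * M i₁ i₂)
    (u v : Fin n → ℝ) (hu : u ∈ Set.Icc uL uU) (hv : v ∈ Set.Icc uL uU)
    (δ : ℝ) (hδ : 0 < δ)
    (hdesc : fderiv ℝ φ u (v - u) ≤ -δ)
    (Klow : ℝ) (hKlowpos : 0 < Klow)
    (hKlow : Klow ≤ 2 * δ / ∑ i₁, ∑ i₂, M i₁ i₂ * (uU i₁ - uL i₁) * (uU i₂ - uL i₂))
    (K : ℝ) (hK1 : K ≤ 1)
    (hK : K ∈ Set.Icc Klow
      (-2 * fderiv ℝ φ u (v - u) /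
        ∑ i₁, ∑ i₂, M i₁ i₂ * |(v i₁ - u i₁) * (v i₂ - u i₂)|)) :
    φ (u + K • (v - u)) - φ u ≤
        max
          (Klow * (Klow * γ *
              (∑ i₁, ∑ i₂, M i₁ i₂ * (uU i₁ - uL i₁) * (uU i₂ - uL i₂)) / 2 - δ))
          (2 * (γ - 1) * δ ^ 2 /
            ∑ i₁, ∑ i₂, M i₁ i₂ * (uU i₁ - uL i₁) * (uU i₂ - uL i₂)) ∧
      max
          (Klow * (Klow * γ *
              (∑ i₁, ∑ i₂, M i₁ i₂ * (uU i₁ - uL i₁) * (uU i₂ - uL i₂)) / 2 - δ))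
          (2 * (γ - 1) * δ ^ 2 /
            ∑ i₁, ∑ i₂, M i₁ i₂ * (uU i₁ - uL i₁) * (uU i₂ - uL i₂)) < 0 :=
  per_iteration_cost_decrease_general uL uU φ U hUopen hIU hφ M hMpos γ hγ hγM u v hu hv δ hδ hdesc
    Klow hKlowpos hKlow K hK1 hK
end

section
/- (One-step feasibility of the filtered iterate.) Let g be C¹ on an open set containing the compact box I ⊂ ℝ^{n_u} with strict univariate Lipschitz constants κ_i > 0 on I. Let u, v ∈ I and K ∈ [0,1] satisfy g(u) + K Σ_{i=1}^{n_u} κ_i |v_i − u_i| ≤ 0. Then g(u + K(v − u)) ≤ 0; moreover, if in addition g(u) < 0, then g(u + K(v − u)) < 0. -/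
/-!
By the mean value theorem on the segment from `u` to `w = u + K (v - u)`, which stays in the
box, `g w - g u` is the derivative of `g` at some point of the box applied to `w - u`. Expanding
`w - u` in the coordinate directions bounds this by `Σ κ_i |w_i - u_i| = K Σ κ_i |v_i - u_i|`,
strictly as soon as `w ≠ u`; and if `w = u` there is nothing to prove.
-/

open Finset

variable {ι : Type*} [Fintype ι] [DecidableEq ι]

theorem abs_apply_lt_sum_mul_abs_of_abs_apply_single_lt {L : (ι → ℝ) →L[ℝ] ℝ} {κ : ι → ℝ}
    (hL : ∀ i, |L (Pi.single i 1)| < κ i) {w : ι → ℝ} (hw : w ≠ 0) :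
    |L w| < ∑ i, κ i * |w i| := by
  obtain ⟨j, hj⟩ := Function.ne_iff.mp hw
  calc |L w| = |∑ i, w i * L (Pi.single i 1)| := by
        conv_lhs => rw [pi_eq_sum_univ' w]
        simp only [map_sum, map_smul, smul_eq_mul]
    _ ≤ ∑ i, |w i| * |L (Pi.single i 1)| := by
        simpa only [abs_mul] using abs_sum_le_sum_abs (fun i => w i * L (Pi.single i 1)) univ
    _ < ∑ i, κ i * |w i| := by
        refine sum_lt_sum (fun i _ => ?_) ⟨j, mem_univ j, ?_⟩
        · rw [mul_comm]
          exact mul_le_mul_of_nonneg_right (hL i).le (abs_nonneg _)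
        · rw [mul_comm]
          exact mul_lt_mul_of_pos_right (hL j) (abs_pos.mpr hj)

theorem Convex.abs_sub_lt_sum_mul_abs_sub {s : Set (ι → ℝ)} (hs : Convex ℝ s)
    {g : (ι → ℝ) → ℝ} (hg : ∀ x ∈ s, DifferentiableAt ℝ g x) {κ : ι → ℝ}
    (hκ : ∀ x ∈ s, ∀ i, |fderiv ℝ g x (Pi.single i 1)| < κ i)
    {x y : ι → ℝ} (hx : x ∈ s) (hy : y ∈ s) (hxy : y ≠ x) :
    |g y - g x| < ∑ i, κ i * |y i - x i| := by
  obtain ⟨z, hz, hmvt⟩ := domain_mvt (fun x hx => (hg x hx).hasFDerivAt.hasFDerivWithinAt)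
    hs hx hy
  rw [hmvt]
  exact abs_apply_lt_sum_mul_abs_of_abs_apply_single_lt (hκ z (hs.segment_subset hx hy hz))
    (sub_ne_zero.mpr hxy)

theorem one_step_feasibility_general
    {n : ℕ} (uL uU : Fin n → ℝ)
    (g : (Fin n → ℝ) → ℝ)
    (U : Set (Fin n → ℝ)) (hUopen : IsOpen U) (hIU : Set.Icc uL uU ⊆ U)
    (hg : ContDiffOn ℝ 1 g U)
    (κ : Fin n → ℝ)
    (hκ : ∀ u ∈ Set.Icc uL uU, ∀ i, |fderiv ℝ g u (Pi.single i 1)| < κ i)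
    (u v : Fin n → ℝ) (hu : u ∈ Set.Icc uL uU) (hv : v ∈ Set.Icc uL uU)
    (K : ℝ) (hK : K ∈ Set.Icc (0 : ℝ) 1)
    (hfeas : g u + K * ∑ i, κ i * |v i - u i| ≤ 0) :
    g (u + K • (v - u)) ≤ 0 ∧ (g u < 0 → g (u + K • (v - u)) < 0) := by
  set w := u + K • (v - u)
  have hdiff : ∀ x ∈ Set.Icc uL uU, DifferentiableAt ℝ g x := fun x hx =>
    (hg.differentiableOn one_ne_zero).differentiableAt (hUopen.mem_nhds (hIU hx))
  have hw : w ∈ Set.Icc uL uU := (convex_Icc uL uU).add_smul_sub_mem hu hv hK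
  have hstep : ∑ i, κ i * |w i - u i| = K * ∑ i, κ i * |v i - u i| := by
    simp only [w, Pi.add_apply, Pi.smul_apply, Pi.sub_apply, smul_eq_mul, add_sub_cancel_left, abs_mul,
      abs_of_nonneg hK.1, mul_sum]
    exact sum_congr rfl fun i _ => by ring
  rcases eq_or_ne w u with hwu | hwu
  · have hK0 : K * ∑ i, κ i * |v i - u i| = 0 := by simp [← hstep, hwu]
    rw [hwu]
    exact ⟨by linarith, id⟩
  · have hlt := (abs_lt.mp ((convex_Icc uL uU).abs_sub_lt_sum_mul_abs_sub hdiff hκ hu hw hwu)).2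
    exact ⟨by linarith, fun _ => by linarith⟩

/-- One-step feasibility of the filtered iterate: if `g` is C¹ on an
open set containing the box `I = Icc uL uU` with strict univariate Lipschitz constants
`κ i` on `I`, and `u, v ∈ I`, `K ∈ [0,1]` satisfy
`g u + K Σ_i κ i |v i - u i| ≤ 0`, then `g (u + K • (v - u)) ≤ 0`; moreover it is
strict if in addition `g u < 0`. -/
theorem one_step_feasibility
    {n : ℕ} (uL uU : Fin n → ℝ)
    (g : (Fin n → ℝ) → ℝ)
    (U : Set (Fin n → ℝ)) (hUopen : IsOpen U) (hIU : Set.Icc uL uU ⊆ U)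
    (hg : ContDiffOn ℝ 1 g U)
    (κ : Fin n → ℝ) (hκpos : ∀ i, 0 < κ i)
    (hκ : ∀ u ∈ Set.Icc uL uU, ∀ i, |fderiv ℝ g u (Pi.single i 1)| < κ i)
    (u v : Fin n → ℝ) (hu : u ∈ Set.Icc uL uU) (hv : v ∈ Set.Icc uL uU)
    (K : ℝ) (hK : K ∈ Set.Icc (0 : ℝ) 1)
    (hfeas : g u + K * ∑ i, κ i * |v i - u i| ≤ 0) :
    g (u + K • (v - u)) ≤ 0 ∧ (g u < 0 → g (u + K • (v - u)) < 0) :=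
  one_step_feasibility_general uL uU g U hUopen hIU hg κ hκ u v hu hv K hK hfeas
end
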